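/- arXiv:0810.2743 — 2 statements merged into one kernel-verified Lean document; each statement's English description precedes it below -/
import Mathlib

section
/- For a finite Coxeter group W and J ⊆ S, the set X_J of minimal length right coset representatives of W_J equals the set of prefixes of the longest coset representative w_J w_0, where u is a prefix of w means ℓ(u⁻¹w) = ℓ(w) − ℓ(u). -/
/-- The set `X_J = {x : ℓ(sx) > ℓ(x) for all s ∈ J}`. -/
def CoxX {B W : Type*} [Group W] {M : CoxeterMatrix B} (cs : CoxeterSystem M W)
    (J : Set B) : Set W :=
  {x | ∀ s ∈ J, cs.length (cs.simple s * x) > cs.length x}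

/-- The standard parabolic subgroup `W_J`. -/
def CoxParabolic {B W : Type*} [Group W] {M : CoxeterMatrix B} (cs : CoxeterSystem M W)
    (J : Set B) : Subgroup W :=
  Subgroup.closure (cs.simple '' J)

/-- `u` is a prefix of `w` in the weak Bruhat order: `ℓ(u⁻¹w) = ℓ(w) - ℓ(u)`. -/
def CoxIsPrefix {B W : Type*} [Group W] {M : CoxeterMatrix B} (cs : CoxeterSystem M W)
    (u w : W) : Prop :=
  cs.length u + cs.length (u⁻¹ * w) = cs.length w

/-!
Following Bourbaki, lifting `s i ↦ ([· = s i], s i)` to the semidirect product `(W → ZMod 2) ⋊ W`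
(conjugation action) gives a cocycle `invParity` such that `invParity (π ω) t` is the parity of the
number of occurrences of `t` in the left inversion sequence of `ω`. Hence for a reflection `t`,
`invParity w t = 1` iff `t` is a left inversion of `w` (strong exchange), and a left inversion `t`
of `u * v` is a left inversion of `u`, or `u⁻¹ * t * u` is one of `v`.

With `w₀` longest, every reflection is a left inversion of `w₀ = u * (u⁻¹ * w₀)`, which makes every
`u` a prefix of `w₀`: `ℓ (v * w₀) = ℓ w₀ - ℓ v`. Together with `ℓ (u * x) = ℓ u + ℓ x` for
`u ∈ W_J`, `x ∈ X_J`, this gives `ℓ (x⁻¹ * w_J * w₀) = ℓ (w_J * w₀) - ℓ x` for `x ∈ X_J`.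
Conversely `w_J * w₀ ∈ X_J` because `ℓ (s * w_J) < ℓ w_J` for `s ∈ J`, and `X_J` is closed under
prefixes.
-/

theorem ZMod.eq_zero_or_eq_one (a : ZMod 2) : a = 0 ∨ a = 1 := by
  revert a; decide

theorem inv_mul_mul_eq_iff_eq_mul_mul_inv {G : Type*} [Group G] {u x a : G} :
    u⁻¹ * x * u = a ↔ x = u * a * u⁻¹ := by
  constructor <;> rintro rfl <;> group

theorem Finset.sum_range_two_mul {R : Type*} [AddCommMonoid R] (g : ℕ → R) (m : ℕ) :
    ∑ n ∈ Finset.range (2 * m), g n = ∑ k ∈ Finset.range m, (g (2 * k) + g (2 * k + 1)) := by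
  induction m with
  | zero => simp
  | succ m ih =>
    rw [Finset.sum_range_succ, ← ih, Nat.mul_succ, Finset.sum_range_succ, Finset.sum_range_succ,
      add_assoc]

@[ext] structure ConjSemidirect (W : Type*) where
  f : W → ZMod 2
  w : W

namespace ConjSemidirect

variable {W : Type*} [Group W]

instance : Mul (ConjSemidirect W) :=
  ⟨fun a b => ⟨a.f + fun x => b.f (a.w⁻¹ * x * a.w), a.w * b.w⟩⟩
instance : One (ConjSemidirect W) := ⟨⟨0, 1⟩⟩
instance : Inv (ConjSemidirect W) := ⟨fun a => ⟨fun x => a.f (a.w * x * a.w⁻¹), a.w⁻¹⟩⟩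

lemma mul_f (a b : ConjSemidirect W) (x : W) : (a * b).f x = a.f x + b.f (a.w⁻¹ * x * a.w) := rfl
lemma mul_w (a b : ConjSemidirect W) : (a * b).w = a.w * b.w := rfl
lemma one_f : (1 : ConjSemidirect W).f = 0 := rfl
lemma one_w : (1 : ConjSemidirect W).w = 1 := rfl
lemma inv_f (a : ConjSemidirect W) (x : W) : a⁻¹.f x = a.f (a.w * x * a.w⁻¹) := rfl
lemma inv_w (a : ConjSemidirect W) : a⁻¹.w = a.w⁻¹ := rfl

instance : Group (ConjSemidirect W) :=
  Group.ofLeftAxioms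
    (fun a b c => by ext x <;> simp [mul_f, mul_w, mul_assoc, add_assoc])
    (fun a => by ext x <;> simp [mul_f, mul_w, one_f, one_w])
    (fun a => by
      ext x <;>
        simp [mul_f, mul_w, one_f, one_w, inv_f, inv_w, mul_assoc, CharTwo.add_self_eq_zero])

def snd : ConjSemidirect W →* W where
  toFun := w
  map_one' := rfl
  map_mul' _ _ := rfl

lemma pow_f (p : ConjSemidirect W) (m : ℕ) (x : W) :
    (p ^ m).f x = ∑ k ∈ Finset.range m, p.f ((p.w ^ k)⁻¹ * x * p.w ^ k) := by
  induction m generalizing x with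
  | zero => simp [one_f]
  | succ m ih =>
    rw [pow_succ', mul_f, ih, Finset.sum_range_succ', add_comm]
    simp [pow_succ', mul_assoc]

end ConjSemidirect

namespace CoxeterSystem

open ConjSemidirect

variable {B W : Type*} [Group W] {M : CoxeterMatrix B} (cs : CoxeterSystem M W)

local prefix:100 "s" => cs.simple
local prefix:100 "π" => cs.wordProd
local prefix:100 "ℓ" => cs.length
local prefix:100 "lis " => cs.leftInvSeq

section Cocycle

open scoped Classical

noncomputable def invParityGen (i : B) : ConjSemidirect W :=
  ⟨fun x => if x = s i then 1 else 0, s i⟩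

lemma simple_mul_simple_pow_conj (i j : B) (n : ℕ) :
    (s i * s j) ^ n * s i * ((s i * s j) ^ n)⁻¹ = (s i * s j) ^ (2 * n) * s i := by
  have h : SemiconjBy (s i) (s i * s j)⁻¹ (s i * s j) := by
    simp [SemiconjBy, mul_assoc]
  rw [mul_assoc, ← inv_pow, (h.pow_right n).eq, two_mul, pow_add, mul_assoc]

lemma invParityGen_mul_invParityGen_f (i j : B) (y : W) :
    (cs.invParityGen i * cs.invParityGen j).f y =
      (if y = s i then 1 else 0) + (if y = s i * s j * s i then 1 else 0) := by
  simp only [invParityGen, mul_f, inv_mul_mul_eq_iff_eq_mul_mul_inv]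
  simp only [cs.inv_simple]

lemma isLiftable_invParityGen : M.IsLiftable cs.invParityGen := by
  intro i j
  set c := s i * s j with hc
  have hterm (x : W) (k : ℕ) :
      (cs.invParityGen i * cs.invParityGen j).f ((c ^ k)⁻¹ * x * c ^ k) =
        (if x = c ^ (2 * k) * s i then 1 else 0) +
          (if x = c ^ (2 * k + 1) * s i then 1 else 0) := by
    have h2 : c ^ k * (s i * s j * s i) * (c ^ k)⁻¹ = c ^ (2 * k + 1) * s i := by
      rw [show s i * s j * s i = c * s i from rfl, ← mul_assoc, ← (Commute.self_pow c k).eq,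
        pow_succ', mul_assoc c (c ^ (2 * k)), ← simple_mul_simple_pow_conj]
      simp only [mul_assoc, hc]
    rw [invParityGen_mul_invParityGen_f, inv_mul_mul_eq_iff_eq_mul_mul_inv,
      inv_mul_mul_eq_iff_eq_mul_mul_inv, simple_mul_simple_pow_conj, h2]
  ext x
  · -- the `f`-component counts `x` among the `c ^ n * s i`, `n < 2 * M i j`, which repeat with
    -- period `M i j`
    rw [pow_f]
    change ∑ k ∈ Finset.range (M i j),
      (cs.invParityGen i * cs.invParityGen j).f ((c ^ k)⁻¹ * x * c ^ k) = 0
    rw [Finset.sum_congr rfl fun k _ ↦ hterm x k,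
      ← Finset.sum_range_two_mul (fun n ↦ if x = c ^ n * s i then 1 else 0), two_mul,
      Finset.sum_range_add]
    simp only [pow_add, hc, cs.simple_mul_simple_pow, one_mul, CharTwo.add_self_eq_zero]
  · exact (map_pow snd _ _).trans (cs.simple_mul_simple_pow i j)

noncomputable def invParityHom : W →* ConjSemidirect W :=
  cs.lift ⟨cs.invParityGen, cs.isLiftable_invParityGen⟩

noncomputable def invParity (w t : W) : ZMod 2 := (cs.invParityHom w).f t

lemma snd_invParityHom : snd.comp cs.invParityHom = MonoidHom.id W :=
  cs.ext_simple fun i ↦ by simp [invParityHom, cs.lift_apply_simple, invParityGen, snd]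

lemma invParity_mul (u v t : W) :
    cs.invParity (u * v) t = cs.invParity u t + cs.invParity v (u⁻¹ * t * u) := by
  have hu : (cs.invParityHom u).w = u := DFunLike.congr_fun cs.snd_invParityHom u
  rw [invParity, map_mul, mul_f, hu, invParity, invParity]

lemma invParity_one (t : W) : cs.invParity 1 t = 0 := by
  rw [invParity, map_one, one_f, Pi.zero_apply]

lemma invParity_simple (i : B) (t : W) : cs.invParity (s i) t = if t = s i then 1 else 0 := by
  rw [invParity, invParityHom, cs.lift_apply_simple]
  rfl

lemma invParity_inv (u t : W) : cs.invParity u⁻¹ (u⁻¹ * t * u) = cs.invParity u t := by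
  have h := cs.invParity_mul u u⁻¹ t
  rw [mul_inv_cancel, invParity_one] at h
  exact (CharTwo.add_eq_zero.mp h.symm).symm

lemma invParity_wordProd (ω : List B) (t : W) :
    cs.invParity (π ω) t = ((lis ω).count t : ZMod 2) := by
  induction ω generalizing t with
  | nil => simp [invParity_one]
  | cons i ω ih =>
    have ht : t = MulAut.conj (s i) ((s i)⁻¹ * t * s i) := by simp [mul_assoc]
    rw [wordProd_cons, invParity_mul, invParity_simple, ih, leftInvSeq, List.count_cons,
      ht, List.count_map_of_injective _ _ (MulAut.conj (s i)).injective, ← ht]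
    push_cast
    simp only [beq_iff_eq, add_comm, @eq_comm _ (s i)]

lemma invParity_self {t : W} (ht : cs.IsReflection t) : cs.invParity t t = 1 := by
  obtain ⟨w, i, rfl⟩ := ht
  have h₁ : w⁻¹ * (w * s i * w⁻¹) * w = s i := by group
  have h₂ : (w * s i)⁻¹ * (w * s i * w⁻¹) * (w * s i) = s i := by group
  have h₃ := cs.invParity_inv w (w * s i * w⁻¹)
  rw [h₁] at h₃
  rw [invParity_mul, invParity_mul, h₁, h₂, h₃, invParity_simple, if_pos rfl, add_right_comm,
    CharTwo.add_self_eq_zero, zero_add]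

lemma mem_leftInvSeq_of_invParity_eq_one {ω : List B} {t : W}
    (h : cs.invParity (π ω) t = 1) : t ∈ lis ω := by
  rw [← List.count_pos_iff, Nat.pos_iff_ne_zero]
  rintro h₀
  rw [invParity_wordProd, h₀, Nat.cast_zero] at h
  exact zero_ne_one h

lemma isLeftInversion_of_invParity_eq_one {w t : W} (h : cs.invParity w t = 1) :
    cs.IsLeftInversion w t := by
  obtain ⟨ω, hω, rfl⟩ := cs.exists_isReduced w
  exact cs.isLeftInversion_of_mem_leftInvSeq hω (cs.mem_leftInvSeq_of_invParity_eq_one h)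

lemma invParity_eq_one_of_isLeftInversion {w t : W} (h : cs.IsLeftInversion w t) :
    cs.invParity w t = 1 := by
  obtain ⟨ht, hlt⟩ := h
  refine (ZMod.eq_zero_or_eq_one _).resolve_left fun h₀ ↦ ?_
  have h₁ : cs.invParity (t * w) t = 1 := by
    rw [invParity_mul, cs.invParity_self ht, inv_mul_cancel, one_mul, h₀, add_zero]
  have := (cs.isLeftInversion_of_invParity_eq_one h₁).2
  rw [← mul_assoc, ht.mul_self, one_mul] at this
  exact lt_asymm hlt this

theorem mem_leftInvSeq_of_isLeftInversion {ω : List B} {t : W}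
    (h : cs.IsLeftInversion (π ω) t) : t ∈ lis ω :=
  cs.mem_leftInvSeq_of_invParity_eq_one (cs.invParity_eq_one_of_isLeftInversion h)

theorem IsLeftInversion.exists_eraseIdx {ω : List B} {t : W}
    (h : cs.IsLeftInversion (π ω) t) : ∃ j < ω.length, t * π ω = π (ω.eraseIdx j) := by
  obtain ⟨j, hj, rfl⟩ := List.getElem_of_mem (cs.mem_leftInvSeq_of_isLeftInversion h)
  rw [length_leftInvSeq] at hj
  refine ⟨j, hj, ?_⟩
  rw [← getD_leftInvSeq_mul_wordProd, List.getD_eq_getElem]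

theorem IsLeftInversion.of_mul {u v t : W} (h : cs.IsLeftInversion (u * v) t) :
    cs.IsLeftInversion u t ∨ cs.IsLeftInversion v (u⁻¹ * t * u) := by
  have h₁ := cs.invParity_eq_one_of_isLeftInversion h
  rw [invParity_mul] at h₁
  rcases ZMod.eq_zero_or_eq_one (cs.invParity u t) with h₀ | h₀
  · rw [h₀, zero_add] at h₁
    exact .inr (cs.isLeftInversion_of_invParity_eq_one h₁)
  · exact .inl (cs.isLeftInversion_of_invParity_eq_one h₀)

end Cocycle

@[elab_as_elim]
theorem induction_on_length_right {P : W → Prop} (one : P 1)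
    (mul_simple : ∀ w i, ℓ (w * s i) = ℓ w + 1 → P w → P (w * s i)) (w : W) : P w := by
  induction hn : ℓ w generalizing w with
  | zero => rwa [cs.length_eq_zero_iff.mp hn]
  | succ n ih =>
    obtain ⟨i, hi⟩ := cs.exists_rightDescent_of_ne_one (w := w) (by rintro rfl; simp at hn)
    have hlen := cs.isRightDescent_iff.mp hi
    have := mul_simple (w * s i) i (by rw [simple_mul_simple_cancel_right]; omega)
      (ih _ (by omega))
    rwa [simple_mul_simple_cancel_right] at this

theorem exists_reduced_sublist (ω : List B) :
    ∃ ω' : List B, ω'.Sublist ω ∧ cs.IsReduced ω' ∧ π ω' = π ω := by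
  induction ω with
  | nil => exact ⟨[], .slnil, by simp [IsReduced], rfl⟩
  | cons i ω ih =>
    obtain ⟨ω', hsub, hred, hprod⟩ := ih
    rcases cs.length_simple_mul (π ω') i with hup | hdown
    · refine ⟨i :: ω', hsub.cons_cons i, ?_, by rw [wordProd_cons, wordProd_cons, hprod]⟩
      rw [IsReduced, wordProd_cons, hup, hred, List.length_cons]
    · obtain ⟨j, hj, hex⟩ := IsLeftInversion.exists_eraseIdx cs (ω := ω')
        ⟨cs.isReflection_simple i, by omega⟩
      refine ⟨ω'.eraseIdx j, ((ω'.eraseIdx_sublist j).trans hsub).cons i, ?_, ?_⟩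
      · rw [IsReduced, ← hex, List.length_eraseIdx_of_lt hj, ← hred]
        omega
      · rw [← hex, hprod, wordProd_cons]

variable {J : Set B}

lemma simple_mem_coxParabolic {i : B} (hi : i ∈ J) : s i ∈ CoxParabolic cs J :=
  Subgroup.subset_closure ⟨i, hi, rfl⟩

lemma wordProd_mem_coxParabolic {ω : List B} (hω : ∀ i ∈ ω, i ∈ J) :
    π ω ∈ CoxParabolic cs J := by
  induction ω with
  | nil => exact one_mem _
  | cons i ω ih =>
    rw [wordProd_cons]
    exact mul_mem (cs.simple_mem_coxParabolic (hω i (.head ω)))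
      (ih fun j hj ↦ hω j (.tail i hj))

lemma exists_word_of_mem_coxParabolic {u : W} (hu : u ∈ CoxParabolic cs J) :
    ∃ ω : List B, (∀ i ∈ ω, i ∈ J) ∧ π ω = u := by
  have cons : ∀ x ∈ cs.simple '' J, ∀ y : W, (∃ ω : List B, (∀ i ∈ ω, i ∈ J) ∧ π ω = y) →
      ∃ ω : List B, (∀ i ∈ ω, i ∈ J) ∧ π ω = x * y := by
    rintro _ ⟨a, ha, rfl⟩ _ ⟨ω, hω, rfl⟩
    exact ⟨a :: ω, by simpa [ha] using hω, wordProd_cons ..⟩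
  induction hu using Subgroup.closure_induction_left with
  | one => exact ⟨[], by simp, wordProd_nil ..⟩
  | mul_left x hx y _ ih => exact cons x hx y ih
  | inv_mul_cancel x hx y _ ih =>
    obtain ⟨a, ha, rfl⟩ := hx
    rw [inv_simple]
    exact cons _ ⟨a, ha, rfl⟩ y ih

lemma exists_reduced_word_of_mem_coxParabolic {u : W} (hu : u ∈ CoxParabolic cs J) :
    ∃ ω : List B, cs.IsReduced ω ∧ (∀ i ∈ ω, i ∈ J) ∧ π ω = u := by
  obtain ⟨ω, hω, rfl⟩ := cs.exists_word_of_mem_coxParabolic hu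
  obtain ⟨ω', hsub, hred, hprod⟩ := cs.exists_reduced_sublist ω
  exact ⟨ω', hred, fun i hi ↦ hω i (hsub.subset hi), hprod⟩

lemma IsLeftInversion.mem_coxParabolic {u t : W} (hu : u ∈ CoxParabolic cs J)
    (h : cs.IsLeftInversion u t) : t ∈ CoxParabolic cs J := by
  obtain ⟨ω, hω, rfl⟩ := cs.exists_word_of_mem_coxParabolic hu
  obtain ⟨j, -, hj⟩ := IsLeftInversion.exists_eraseIdx cs h
  have := mul_mem (cs.wordProd_mem_coxParabolic fun i hi ↦ hω i ((ω.eraseIdx_sublist j).subset hi))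
    (inv_mem hu)
  rwa [← hj, mul_inv_cancel_right] at this

lemma mem_coxX_of_coxIsPrefix {x v : W} (hv : v ∈ CoxX cs J) (h : CoxIsPrefix cs x v) :
    x ∈ CoxX cs J := by
  intro i hi
  have hv' := hv i hi
  have hle : ℓ (s i * v) ≤ ℓ (s i * x) + ℓ (x⁻¹ * v) := by
    simpa [mul_assoc] using cs.length_mul_le (s i * x) (x⁻¹ * v)
  unfold CoxIsPrefix at h
  omega

theorem eq_one_of_coxIsPrefix_of_mem_coxX {u y : W} (hu : u ∈ CoxParabolic cs J)
    (hy : y ∈ CoxX cs J) (h : CoxIsPrefix cs u y) : u = 1 := by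
  obtain ⟨_ | ⟨a, ω⟩, hred, hω, rfl⟩ := cs.exists_reduced_word_of_mem_coxParabolic hu
  · rfl
  have hay := hy a (hω a (.head ω))
  have hle : ℓ (s a * y) ≤ ℓ (π ω) + ℓ ((π (a :: ω))⁻¹ * y) := by
    have : π ω * ((π (a :: ω))⁻¹ * y) = s a * y := by
      rw [wordProd_cons, mul_inv_rev, inv_simple]
      group
    exact this ▸ cs.length_mul_le _ _
  have hω_len := cs.length_wordProd_le ω
  unfold CoxIsPrefix at h
  rw [hred, List.length_cons] at h
  omega

theorem coxIsPrefix_of_forall_length_le {w₀ : W} (hw₀ : ∀ w, ℓ w ≤ ℓ w₀) (u : W) :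
    CoxIsPrefix cs u w₀ := by
  induction u using cs.induction_on_length_right with
  | one => simp [CoxIsPrefix]
  | mul_simple u i hlen ih =>
    have ht : cs.IsReflection (u * s i * u⁻¹) := (cs.isReflection_simple i).conj u
    have hinv : cs.IsLeftInversion (u * (u⁻¹ * w₀)) (u * s i * u⁻¹) := by
      rw [mul_inv_cancel_left]
      exact ⟨ht, lt_of_le_of_ne (hw₀ _) (ht.length_mul_right_ne w₀)⟩
    rcases IsLeftInversion.of_mul cs hinv with ⟨-, hlt⟩ | ⟨-, hlt⟩
    · rw [inv_mul_cancel_right] at hlt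
      omega
    · have hconj : u⁻¹ * (u * s i * u⁻¹) * u = s i := by group
      rw [hconj] at hlt
      have := cs.length_simple_mul (u⁻¹ * w₀) i
      unfold CoxIsPrefix at ih ⊢
      rw [mul_inv_rev, inv_simple, mul_assoc]
      omega

theorem length_mul_add_length_of_forall_length_le {w₀ : W} (hw₀ : ∀ w, ℓ w ≤ ℓ w₀) (v : W) :
    ℓ (v * w₀) + ℓ v = ℓ w₀ := by
  have := cs.coxIsPrefix_of_forall_length_le hw₀ v⁻¹
  rwa [CoxIsPrefix, inv_inv, length_inv, add_comm] at this

theorem length_mul_of_mem_coxParabolic_of_mem_coxX {u x : W} (hu : u ∈ CoxParabolic cs J)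
    (hx : x ∈ CoxX cs J) : ℓ (u * x) = ℓ u + ℓ x := by
  induction x using cs.induction_on_length_right generalizing u with
  | one => simp
  | mul_simple x i hlen ih =>
    have hxX : x ∈ CoxX cs J := cs.mem_coxX_of_coxIsPrefix hx (by simp [CoxIsPrefix, hlen])
    replace ih := fun {u} (hu : u ∈ CoxParabolic cs J) ↦ ih hu hxX
    rcases cs.length_mul_simple (u * x) i with hup | hdown
    · rw [← mul_assoc, hup, ih hu]
      omega
    exfalso
    set r := x * s i * x⁻¹ with hr_def
    -- the left inversion `u * r * u⁻¹` of `u * x` would come from `u`, making `r ∈ W_J` a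
    -- nontrivial prefix of `x * s i ∈ X_J`
    have hr : cs.IsReflection r := (cs.isReflection_simple i).conj x
    have hrx : r * x = x * s i := by rw [hr_def]; group
    have hinv : cs.IsLeftInversion (u * x) (u * r * u⁻¹) := by
      refine ⟨hr.conj u, ?_⟩
      rw [show u * r * u⁻¹ * (u * x) = u * (r * x) by group, hrx, ← mul_assoc]
      omega
    rcases IsLeftInversion.of_mul cs hinv with hu' | ⟨-, hlt⟩
    · have hrJ : r ∈ CoxParabolic cs J := by
        have := mul_mem (mul_mem (inv_mem hu) (hu'.mem_coxParabolic cs hu)) hu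
        rwa [show u⁻¹ * (u * r * u⁻¹) * u = r by group] at this
      have hr_prefix : CoxIsPrefix cs r (x * s i) := by
        rw [CoxIsPrefix, ← hrx, ih hrJ, inv_mul_cancel_left]
      rw [cs.eq_one_of_coxIsPrefix_of_mem_coxX hrJ hx hr_prefix, one_mul] at hrx
      rw [← hrx] at hlen
      omega
    · rw [show u⁻¹ * (u * r * u⁻¹) * u * x = r * x by group, hrx] at hlt
      omega

theorem mul_longest_mem_coxX {w₀ wJ : W} (hw₀ : ∀ w, ℓ w ≤ ℓ w₀)
    (hwJ : wJ ∈ CoxParabolic cs J) (hwJ_max : ∀ u ∈ CoxParabolic cs J, ℓ u ≤ ℓ wJ) :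
    wJ * w₀ ∈ CoxX cs J := by
  intro a ha
  have hlt : ℓ (s a * wJ) < ℓ wJ :=
    lt_of_le_of_ne (hwJ_max _ (mul_mem (cs.simple_mem_coxParabolic ha) hwJ))
      (cs.length_simple_mul_ne wJ a)
  have h₁ := cs.length_mul_add_length_of_forall_length_le hw₀ (s a * wJ)
  have h₂ := cs.length_mul_add_length_of_forall_length_le hw₀ wJ
  rw [← mul_assoc]
  omega

theorem coxIsPrefix_mul_longest_of_mem_coxX {w₀ v x : W} (hw₀ : ∀ w, ℓ w ≤ ℓ w₀)
    (hv : v ∈ CoxParabolic cs J) (hx : x ∈ CoxX cs J) : CoxIsPrefix cs x (v * w₀) := by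
  have hadd := cs.length_mul_of_mem_coxParabolic_of_mem_coxX (inv_mem hv) hx
  have h₁ := cs.length_mul_add_length_of_forall_length_le hw₀ (x⁻¹ * v)
  have h₂ := cs.length_mul_add_length_of_forall_length_le hw₀ v
  rw [← cs.length_inv (x⁻¹ * v), mul_inv_rev, inv_inv] at h₁
  rw [cs.length_inv] at hadd
  rw [CoxIsPrefix, ← mul_assoc]
  omega

end CoxeterSystem

theorem stmt6_general {B W : Type*} [Group W]
    {M : CoxeterMatrix B} (cs : CoxeterSystem M W) (J : Set B) (w0 wJ : W)
    (hw0 : ∀ w : W, cs.length w ≤ cs.length w0)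
    (hwJ : wJ ∈ CoxParabolic cs J ∧
      ∀ u ∈ CoxParabolic cs J, cs.length u ≤ cs.length wJ) :
    CoxX cs J = {x : W | CoxIsPrefix cs x (wJ * w0)} := by
  obtain ⟨hwJ, hwJ_max⟩ := hwJ
  ext x
  exact ⟨cs.coxIsPrefix_mul_longest_of_mem_coxX hw0 hwJ,
    cs.mem_coxX_of_coxIsPrefix (cs.mul_longest_mem_coxX hw0 hwJ hwJ_max)⟩

theorem stmt6 {B W : Type*} [Fintype B] [Group W] [Fintype W]
    {M : CoxeterMatrix B} (cs : CoxeterSystem M W) (J : Set B) (w0 wJ : W)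
    (hw0 : ∀ w : W, cs.length w ≤ cs.length w0)
    (hwJ : wJ ∈ CoxParabolic cs J ∧
      ∀ u ∈ CoxParabolic cs J, cs.length u ≤ cs.length wJ) :
    CoxX cs J = {x : W | CoxIsPrefix cs x (wJ * w0)} :=
  stmt6_general cs J w0 wJ hw0 hwJ
end

section
/- In the group algebra ℚW of a finite Coxeter group W, the longest element w_0 lies in the descent algebra Σ(W); explicitly, w_0 = Σ_{K ⊆ S} (−1)^{|K|} x_K, where x_K = Σ_{w ∈ X_K} w⁻¹. -/
open scoped Classical

/-- `x_K = Σ_{w ∈ X_K} w⁻¹` in `ℚW`, where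
`X_K = {w : ℓ(sw) > ℓ(w) for all s ∈ K}`. -/
noncomputable def xEl {B W : Type*} [Fintype B] [Group W] [Fintype W]
    {M : CoxeterMatrix B} (cs : CoxeterSystem M W) (K : Finset B) :
    MonoidAlgebra ℚ W :=
  ∑ w : W, if (∀ s ∈ K, cs.length (cs.simple s * w) > cs.length w) then
    MonoidAlgebra.single w⁻¹ (1 : ℚ) else 0

namespace CoxAux

open CoxeterSystem List

variable {B W : Type*} [Group W] {M : CoxeterMatrix B} (cs : CoxeterSystem M W)

noncomputable def delta (x : W) : W → ℤˣ := fun y => if y = x then -1 else 1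

lemma sq_one (f : W → ℤˣ) : f * f = 1 :=
  funext fun y => Int.units_mul_self (f y)

variable (W) in
def conjAct (w : W) : (W → ℤˣ) ≃* (W → ℤˣ) where
  toFun f := fun x => f (w⁻¹ * x * w)
  invFun f := fun x => f (w * x * w⁻¹)
  left_inv f := by funext x; congr 1; group
  right_inv f := by funext x; congr 1; group
  map_mul' f g := rfl

variable (W) in
def phi : W →* MulAut (W → ℤˣ) where
  toFun := conjAct W
  map_one' := by apply MulEquiv.ext; intro f; funext x; simp [conjAct]
  map_mul' u v := by
    apply MulEquiv.ext; intro f; funext x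
    show f ((u * v)⁻¹ * x * (u * v)) = f (v⁻¹ * (u⁻¹ * x * u) * v)
    congr 1; group

lemma phi_apply (w : W) (f : W → ℤˣ) (y : W) : phi W w f y = f (w⁻¹ * y * w) := rfl

lemma phi_delta (w x : W) : phi W w (delta x) = delta (w * x * w⁻¹) := by
  funext y
  show (if w⁻¹ * y * w = x then _ else _) = (if y = w * x * w⁻¹ then _ else _)
  refine if_congr ?_ rfl rfl
  constructor
  · intro h; rw [← h]; group
  · intro h; rw [h]; group


lemma mk_pow (a : W → ℤˣ) (p : W) (m : ℕ) :
    (⟨a, p⟩ : (W → ℤˣ) ⋊[phi W] W) ^ m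
      = ⟨∏ k ∈ Finset.range m, phi W (p ^ k) a, p ^ m⟩ := by
  induction m with
  | zero => rw [pow_zero, Finset.range_zero, Finset.prod_empty, pow_zero]; rfl
  | succ n ih =>
      rw [pow_succ, ih, SemidirectProduct.mul_def]
      rw [Finset.prod_range_succ, pow_succ]

lemma prod_pair {N : Type*} [CommMonoid N] (g : ℕ → N) (m : ℕ) :
    ∏ k ∈ Finset.range m, (g (2*k) * g (2*k+1)) = ∏ c ∈ Finset.range (2*m), g c := by
  induction m with
  | zero => simp
  | succ n ih =>
      rw [Finset.prod_range_succ, ih, show 2*(n+1) = (2*n+1)+1 by ring,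
        Finset.prod_range_succ, Finset.prod_range_succ, mul_assoc]

/-- The generators of the semidirect product. -/
noncomputable def fg (i : B) : (W → ℤˣ) ⋊[phi W] W :=
  ⟨delta (cs.simple i), cs.simple i⟩

lemma genconj {G : Type*} [Group G] (p a : G) (hpa : a * p⁻¹ * a⁻¹ = p) (k : ℕ) :
    p ^ k * a * (p ^ k)⁻¹ = p ^ (2*k) * a := by
  induction k with
  | zero => simp
  | succ n ih =>
      calc p ^ (n+1) * a * (p ^ (n+1))⁻¹
          = p * (p ^ n * a * (p ^ n)⁻¹) * p⁻¹ := by group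
        _ = p * (p ^ (2*n) * a) * p⁻¹ := by rw [ih]
        _ = p ^ (2*n+1) * (a * p⁻¹ * a⁻¹) * a := by group
        _ = p ^ (2*n+1) * p * a := by rw [hpa]
        _ = p ^ ((2*n+1)+1) * a := by group
        _ = p ^ (2*(n+1)) * a := by rw [show (2*n+1)+1 = 2*(n+1) by ring]

lemma genconj2 {G : Type*} [Group G] (p a : G) (hpa : a * p⁻¹ * a⁻¹ = p) (k : ℕ) :
    p ^ k * (p * a) * (p ^ k)⁻¹ = p ^ (2*k+1) * a := by
  calc p ^ k * (p * a) * (p ^ k)⁻¹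
      = p * (p ^ k * a * (p ^ k)⁻¹) := by group
    _ = p * (p ^ (2*k) * a) := by rw [genconj p a hpa]
    _ = p ^ (2*k+1) * a := by rw [pow_succ', mul_assoc]

lemma hpa_simple (i j : B) :
    cs.simple i * (cs.simple i * cs.simple j)⁻¹ * (cs.simple i)⁻¹
      = cs.simple i * cs.simple j := by
  simp [mul_inv_rev, cs.inv_simple, mul_assoc, cs.simple_mul_simple_self]

lemma liftable : M.IsLiftable (fg cs) := by
  intro i j
  rw [show fg cs i * fg cs j
      = (⟨delta (cs.simple i) * delta ((cs.simple i * cs.simple j) * cs.simple i),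
          cs.simple i * cs.simple j⟩ : (W → ℤˣ) ⋊[phi W] W) by
    rw [fg, fg, SemidirectProduct.mul_def, phi_delta, cs.inv_simple, mul_assoc]]
  rw [mk_pow, cs.simple_mul_simple_pow]
  have hcoc : (∏ k ∈ Finset.range (M i j),
      phi W ((cs.simple i * cs.simple j) ^ k)
        (delta (cs.simple i) * delta ((cs.simple i * cs.simple j) * cs.simple i))) = 1 := by
    have hterm : ∀ k, phi W ((cs.simple i * cs.simple j) ^ k)
        (delta (cs.simple i) * delta ((cs.simple i * cs.simple j) * cs.simple i))
        = delta ((cs.simple i * cs.simple j) ^ (2*k) * cs.simple i)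
          * delta ((cs.simple i * cs.simple j) ^ (2*k+1) * cs.simple i) := by
      intro k
      rw [map_mul, phi_delta, phi_delta,
        genconj _ _ (hpa_simple cs i j) k, genconj2 _ _ (hpa_simple cs i j) k]
    calc (∏ k ∈ Finset.range (M i j),
        phi W ((cs.simple i * cs.simple j) ^ k)
          (delta (cs.simple i) * delta ((cs.simple i * cs.simple j) * cs.simple i)))
        = ∏ c ∈ Finset.range (2 * M i j),
            delta ((cs.simple i * cs.simple j) ^ c * cs.simple i) := by
          rw [← prod_pair]
          exact Finset.prod_congr rfl fun k _ => hterm k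
      _ = (∏ c ∈ Finset.range (M i j),
            delta ((cs.simple i * cs.simple j) ^ c * cs.simple i))
          * ∏ c ∈ Finset.range (M i j),
            delta ((cs.simple i * cs.simple j) ^ (M i j + c) * cs.simple i) := by
          rw [two_mul, Finset.prod_range_add]
      _ = (∏ c ∈ Finset.range (M i j),
            delta ((cs.simple i * cs.simple j) ^ c * cs.simple i))
          * ∏ c ∈ Finset.range (M i j),
            delta ((cs.simple i * cs.simple j) ^ c * cs.simple i) := by
          congr 1
          refine Finset.prod_congr rfl fun c _ => ?_
          rw [pow_add, cs.simple_mul_simple_pow, one_mul]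
      _ = 1 := sq_one _
  rw [hcoc]
  rfl


/-- The Tits sign homomorphism into the semidirect product. -/
noncomputable def mu : W →* (W → ℤˣ) ⋊[phi W] W :=
  cs.lift ⟨fg cs, liftable cs⟩

lemma mu_simple (i : B) : mu cs (cs.simple i) = fg cs i :=
  cs.lift_apply_simple (liftable cs) i

lemma mu_right (w : W) : (mu cs w).right = w := by
  have h : (SemidirectProduct.rightHom.comp (mu cs)) = MonoidHom.id W := by
    apply cs.ext_simple
    intro i
    simp only [MonoidHom.comp_apply, MonoidHom.id_apply, mu_simple]
    rfl
  exact DFunLike.congr_fun h w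

/-- The sign cocycle. -/
noncomputable def eta (w : W) : W → ℤˣ := (mu cs w).left

lemma eta_mul (u v : W) : eta cs (u * v) = eta cs u * phi W u (eta cs v) := by
  unfold eta
  rw [map_mul, SemidirectProduct.mul_left, mu_right]

lemma eta_mul_apply (u v t : W) :
    eta cs (u * v) t = eta cs u t * eta cs v (u⁻¹ * t * u) := by
  rw [eta_mul]; rfl

lemma eta_simple (i : B) : eta cs (cs.simple i) = delta (cs.simple i) := by
  unfold eta
  rw [mu_simple]; rfl

lemma eta_one : eta cs 1 = 1 := by
  unfold eta
  rw [map_one]; rfl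

lemma eta_wordProd (ω : List B) :
    eta cs (cs.wordProd ω) = ((cs.leftInvSeq ω).map delta).prod := by
  induction ω with
  | nil => rw [cs.wordProd_nil, eta_one, leftInvSeq_nil]; rfl
  | cons i ω ih =>
      rw [cs.wordProd_cons, eta_mul, eta_simple, ih]
      show _ = ((cs.leftInvSeq (i :: ω)).map delta).prod
      have hcons : cs.leftInvSeq (i :: ω)
          = cs.simple i :: List.map (MulAut.conj (cs.simple i)) (cs.leftInvSeq ω) := rfl
      rw [hcons, List.map_cons, List.prod_cons]
      congr 1
      rw [map_list_prod (phi W (cs.simple i)), List.map_map, List.map_map]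
      refine congrArg List.prod (List.map_congr_left fun t _ => ?_)
      show phi W (cs.simple i) (delta t) = delta (MulAut.conj (cs.simple i) t)
      rw [phi_delta, MulAut.conj_apply]

lemma prod_delta_apply (L : List W) (t : W) :
    (L.map delta).prod t = (-1 : ℤˣ) ^ (L.count t) := by
  induction L with
  | nil => simp
  | cons a L ih =>
      rw [List.map_cons, List.prod_cons, List.count_cons]
      show delta a t * (L.map delta).prod t = _
      rw [ih]
      by_cases h : a = t
      · subst h
        simp [delta, pow_succ, mul_comm]
      · rw [if_neg (by simpa using h), delta, if_neg (fun hh => h hh.symm), add_zero, one_mul]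

lemma inversion_of_eta (w t : W) (h : eta cs w t = -1) :
    cs.length (t * w) < cs.length w := by
  obtain ⟨ω, hred, rfl⟩ := cs.exists_reduced_word' w
  rw [eta_wordProd, prod_delta_apply] at h
  have hne : (cs.leftInvSeq ω).count t ≠ 0 := by
    intro h0
    rw [h0, pow_zero] at h
    exact (by decide : (1 : ℤˣ) ≠ -1) h
  have hmem : t ∈ cs.leftInvSeq ω := List.count_pos_iff.mp (Nat.pos_of_ne_zero hne)
  exact (cs.isLeftInversion_of_mem_leftInvSeq hred hmem).2

lemma eta_conj_self (x : W) (j : B) (h : eta cs x x = -1) :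
    eta cs (cs.simple j * x * cs.simple j) (cs.simple j * x * cs.simple j) = -1 := by
  have hsj : cs.simple j * cs.simple j = 1 := cs.simple_mul_simple_self j
  have h2 : (cs.simple j)⁻¹ * (cs.simple j * x * cs.simple j) * cs.simple j = x := by
    rw [cs.inv_simple]
    rw [show cs.simple j * (cs.simple j * x * cs.simple j) * cs.simple j
        = (cs.simple j * cs.simple j) * x * (cs.simple j * cs.simple j) by group]
    rw [hsj, one_mul, mul_one]
  have key : eta cs (cs.simple j * x * cs.simple j) (cs.simple j * x * cs.simple j)
      = delta (cs.simple j) (cs.simple j * x * cs.simple j)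
        * (eta cs x x * delta (cs.simple j) (x⁻¹ * x * x)) := by
    rw [show cs.simple j * x * cs.simple j = cs.simple j * (x * cs.simple j) by group]
    rw [eta_mul_apply, eta_simple]
    congr 1
    rw [show (cs.simple j)⁻¹ * (cs.simple j * (x * cs.simple j)) * cs.simple j
        = (cs.simple j)⁻¹ * (cs.simple j * x * cs.simple j) * cs.simple j by group, h2]
    rw [eta_mul_apply, eta_simple]
  rw [key, h, show x⁻¹ * x * x = x by group]
  by_cases hx : x = cs.simple j
  · have hy : cs.simple j * x * cs.simple j = cs.simple j := by
      rw [hx, hsj, one_mul]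
    rw [delta, if_pos hy, delta, if_pos hx]
    decide
  · have hy : cs.simple j * x * cs.simple j ≠ cs.simple j := by
      intro hc
      apply hx
      rw [← h2, hc]
      simp
    rw [delta, if_neg hy, delta, if_neg hx]
    decide

lemma eta_refl_self (t : W) (ht : cs.IsReflection t) : eta cs t t = -1 := by
  obtain ⟨w, i, rfl⟩ := ht
  obtain ⟨ω, rfl⟩ := cs.wordProd_surjective w
  induction ω with
  | nil =>
      rw [cs.wordProd_nil, one_mul, inv_one, mul_one, eta_simple, delta, if_pos rfl]
  | cons j ω ih =>
      have hrw : cs.wordProd (j :: ω) * cs.simple i * (cs.wordProd (j :: ω))⁻¹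
          = cs.simple j * (cs.wordProd ω * cs.simple i * (cs.wordProd ω)⁻¹) * cs.simple j := by
        rw [cs.wordProd_cons, mul_inv_rev, cs.inv_simple]
        group
      rw [hrw]
      exact eta_conj_self cs _ j ih

lemma descent_eta (w t : W) (ht : cs.IsReflection t)
    (h : cs.length (t * w) < cs.length w) : eta cs w t = -1 := by
  rcases Int.units_eq_one_or (eta cs w t) with h1 | h1
  · exfalso
    have h2 : eta cs (t * w) t = -1 := by
      rw [eta_mul_apply, show t⁻¹ * t * t = t by group, eta_refl_self cs t ht, h1, mul_one]
    have h3 := inversion_of_eta cs (t * w) t h2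
    rw [show t * (t * w) = w by rw [← mul_assoc, ht.mul_self, one_mul]] at h3
    omega
  · exact h1

lemma eq_of_all_descents (w0 w : W) (hw0 : ∀ v : W, cs.length v ≤ cs.length w0)
    (hw : ∀ i : B, cs.length (cs.simple i * w) < cs.length w) : w = w0 := by
  by_contra hne
  have hv1 : w * w0⁻¹ ≠ 1 := fun h => hne (mul_inv_eq_one.mp h)
  obtain ⟨j, hj⟩ := cs.exists_leftDescent_of_ne_one hv1
  have hvj : eta cs (w * w0⁻¹) (cs.simple j) = -1 :=
    descent_eta cs _ _ (cs.isReflection_simple j) hj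
  have hwj : eta cs w (cs.simple j) = -1 :=
    descent_eta cs _ _ (cs.isReflection_simple j) (hw j)
  have hrefl : cs.IsReflection ((w * w0⁻¹)⁻¹ * cs.simple j * (w * w0⁻¹)) := by
    have := (cs.isReflection_simple j).conj (w * w0⁻¹)⁻¹
    rwa [inv_inv] at this
  have hw0j : eta cs w0 ((w * w0⁻¹)⁻¹ * cs.simple j * (w * w0⁻¹)) = -1 :=
    descent_eta cs w0 _ hrefl
      (lt_of_le_of_ne (hw0 _) (hrefl.length_mul_right_ne w0))
  have key : eta cs ((w * w0⁻¹) * w0) (cs.simple j)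
      = eta cs (w * w0⁻¹) (cs.simple j)
        * eta cs w0 ((w * w0⁻¹)⁻¹ * cs.simple j * (w * w0⁻¹)) := eta_mul_apply cs _ _ _
  rw [inv_mul_cancel_right, hwj, hvj, hw0j] at key
  exact (by decide : ¬ ((-1 : ℤˣ) = -1 * -1)) key

end CoxAux

/-- In `ℚW`, `w_0 = Σ_{K ⊆ S} (−1)^{|K|} x_K`. -/
theorem stmt16 {B W : Type*} [Fintype B] [Group W] [Fintype W]
    {M : CoxeterMatrix B} (cs : CoxeterSystem M W) (w0 : W)
    (hw0 : ∀ w : W, cs.length w ≤ cs.length w0) :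
    MonoidAlgebra.single w0 (1 : ℚ) =
      ∑ K : Finset B, ((-1 : ℚ) ^ K.card) • xEl cs K := by
  classical
  have hD0 : ∀ i : B, cs.length (cs.simple i * w0) < cs.length w0 :=
    fun i => lt_of_le_of_ne (hw0 _) (cs.length_simple_mul_ne w0 i)
  have hw0inv : w0⁻¹ = w0 := by
    refine CoxAux.eq_of_all_descents cs w0 w0⁻¹ hw0 (fun i => ?_)
    have h1 : cs.length (cs.simple i * w0⁻¹) = cs.length (w0 * cs.simple i) := by
      rw [← cs.length_inv (cs.simple i * w0⁻¹), mul_inv_rev, inv_inv, cs.inv_simple]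
    rw [h1, cs.length_inv]
    exact lt_of_le_of_ne (hw0 _) (cs.length_mul_simple_ne w0 i)
  have key : ∀ w : W,
      (∑ K : Finset B, if (∀ s ∈ K, cs.length (cs.simple s * w) > cs.length w)
        then ((-1 : ℚ) ^ K.card • MonoidAlgebra.single w⁻¹ (1:ℚ)) else 0)
      = (if w = w0 then MonoidAlgebra.single w⁻¹ (1:ℚ) else 0) := by
    intro w
    have hAiff : ∀ K : Finset B,
        (∀ s ∈ K, cs.length (cs.simple s * w) > cs.length w) ↔
          K ∈ (Finset.univ.filter
            (fun i : B => cs.length w < cs.length (cs.simple i * w))).powerset := by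
      intro K
      rw [Finset.mem_powerset]
      constructor
      · intro h i hi; exact Finset.mem_filter.mpr ⟨Finset.mem_univ i, h i hi⟩
      · intro h i hi; exact (Finset.mem_filter.mp (h hi)).2
    have hAempty : (Finset.univ.filter
        (fun i : B => cs.length w < cs.length (cs.simple i * w))) = ∅ ↔ w = w0 := by
      constructor
      · intro h
        refine CoxAux.eq_of_all_descents cs w0 w hw0 fun i => ?_
        have h2 : ¬ cs.length w < cs.length (cs.simple i * w) := by
          intro hlt
          have hmem : i ∈ (Finset.univ.filter
              (fun i : B => cs.length w < cs.length (cs.simple i * w))) :=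
            Finset.mem_filter.mpr ⟨Finset.mem_univ i, hlt⟩
          rw [h] at hmem
          exact absurd hmem (Finset.notMem_empty i)
        exact lt_of_le_of_ne (not_lt.mp h2) (cs.length_simple_mul_ne w i)
      · rintro rfl
        exact Finset.filter_eq_empty_iff.mpr fun i _ => not_lt.mpr (le_of_lt (hD0 i))
    calc (∑ K : Finset B, if (∀ s ∈ K, cs.length (cs.simple s * w) > cs.length w)
          then ((-1 : ℚ) ^ K.card • MonoidAlgebra.single w⁻¹ (1:ℚ)) else 0)
        = ∑ K : Finset B, if K ∈ (Finset.univ.filter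
            (fun i : B => cs.length w < cs.length (cs.simple i * w))).powerset
          then ((-1 : ℚ) ^ K.card • MonoidAlgebra.single w⁻¹ (1:ℚ)) else 0 :=
          Finset.sum_congr rfl fun K _ => if_congr (hAiff K) rfl rfl
      _ = ∑ K ∈ (Finset.univ.filter
            (fun i : B => cs.length w < cs.length (cs.simple i * w))).powerset,
            (-1 : ℚ) ^ K.card • MonoidAlgebra.single w⁻¹ (1:ℚ) := by
          rw [Finset.sum_ite_mem, Finset.univ_inter]
      _ = (∑ K ∈ (Finset.univ.filter
            (fun i : B => cs.length w < cs.length (cs.simple i * w))).powerset,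
            (-1 : ℚ) ^ K.card) • MonoidAlgebra.single w⁻¹ (1:ℚ) := by
          rw [Finset.sum_smul]
      _ = (if (Finset.univ.filter
            (fun i : B => cs.length w < cs.length (cs.simple i * w))) = ∅
            then (1:ℚ) else 0) • MonoidAlgebra.single w⁻¹ (1:ℚ) := by
          congr 1
          have hcast : (∑ K ∈ (Finset.univ.filter
              (fun i : B => cs.length w < cs.length (cs.simple i * w))).powerset,
              (-1 : ℚ) ^ K.card)
              = ((∑ K ∈ (Finset.univ.filter
                (fun i : B => cs.length w < cs.length (cs.simple i * w))).powerset,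
                (-1 : ℤ) ^ K.card : ℤ) : ℚ) := by
            push_cast
            rfl
          rw [hcast, Finset.sum_powerset_neg_one_pow_card]
          split <;> simp
      _ = (if w = w0 then (1:ℚ) else 0) • MonoidAlgebra.single w⁻¹ (1:ℚ) := by
          rw [if_congr hAempty rfl rfl]
      _ = (if w = w0 then MonoidAlgebra.single w⁻¹ (1:ℚ) else 0) := by
          rw [ite_smul, one_smul, zero_smul]
  rw [eq_comm]
  calc ∑ K : Finset B, ((-1 : ℚ) ^ K.card) • xEl cs K
      = ∑ K : Finset B, ∑ w : W,
          (if (∀ s ∈ K, cs.length (cs.simple s * w) > cs.length w)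
            then ((-1 : ℚ) ^ K.card • MonoidAlgebra.single w⁻¹ (1:ℚ)) else 0) := by
        refine Finset.sum_congr rfl fun K _ => ?_
        rw [xEl, Finset.smul_sum]
        refine Finset.sum_congr rfl fun w _ => ?_
        rw [smul_ite, smul_zero]
    _ = ∑ w : W, ∑ K : Finset B,
          (if (∀ s ∈ K, cs.length (cs.simple s * w) > cs.length w)
            then ((-1 : ℚ) ^ K.card • MonoidAlgebra.single w⁻¹ (1:ℚ)) else 0) :=
        Finset.sum_comm
    _ = ∑ w : W, (if w = w0 then MonoidAlgebra.single w⁻¹ (1:ℚ) else 0) :=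
        Finset.sum_congr rfl fun w _ => key w
    _ = MonoidAlgebra.single w0⁻¹ (1:ℚ) := by
        rw [Finset.sum_ite_eq' Finset.univ w0
          (fun w => MonoidAlgebra.single w⁻¹ (1:ℚ)), if_pos (Finset.mem_univ w0)]
    _ = MonoidAlgebra.single w0 (1:ℚ) := by rw [hw0inv]
end
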